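/- For n > h ≥ 0, the number of edges of the Hasse diagram of the independent subsets of the h-th power of a cycle on n vertices, ordered by inclusion, equals n * F^(h)_{n-h}, where F^(h) is the h-Fibonacci sequence defined by F^(h)_m = 1 for 1 ≤ m ≤ h+1 and F^(h)_m = F^(h)_{m-1} + F^(h)_{m-h-1} for m > h+1. -/

import Mathlib

/-- Independent subsets of the h-th power of the path on n vertices:
subsets of {1,...,n} with all pairwise differences of distinct elements greater than h. -/
def pathSubsets (n h : ℕ) : Finset (Finset ℕ) :=
  (Finset.Icc 1 n).powerset.filter (fun S => ∀ i ∈ S, ∀ j ∈ S, i < j → i + h < j)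

def pathCount (n h k : ℕ) : ℕ := ((pathSubsets n h).filter (fun S => S.card = k)).card

def pathTotal (n h : ℕ) : ℕ := (pathSubsets n h).card

/-- Independent subsets of the h-th power of the cycle on n vertices:
subsets S of {1,...,n} with h < |i-j| < n-h for all distinct i,j ∈ S. -/
def cycleSubsets (n h : ℕ) : Finset (Finset ℕ) :=
  (Finset.Icc 1 n).powerset.filter
    (fun S => ∀ i ∈ S, ∀ j ∈ S, i < j → i + h < j ∧ j + h < n + i)

def cycleCount (n h k : ℕ) : ℕ := ((cycleSubsets n h).filter (fun S => S.card = k)).card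

def cycleTotal (n h : ℕ) : ℕ := (cycleSubsets n h).card

/-- Number of edges of the Hasse diagram of independent subsets of Pₙ⁽ʰ⁾ ordered by inclusion. -/
def pathEdges (n h : ℕ) : ℕ :=
  (((pathSubsets n h) ×ˢ (pathSubsets n h)).filter
    (fun p => p.1 ⊆ p.2 ∧ p.2.card = p.1.card + 1)).card

/-- Number of edges of the Hasse diagram of independent subsets of Cₙ⁽ʰ⁾ ordered by inclusion. -/
def cycleEdges (n h : ℕ) : ℕ :=
  (((cycleSubsets n h) ×ˢ (cycleSubsets n h)).filter
    (fun p => p.1 ⊆ p.2 ∧ p.2.card = p.1.card + 1)).card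

/-! Every independent set `T` covers exactly `#T` independent sets (delete one of its vertices),
so the Hasse diagram has `∑ T, #T = ∑ x, #{T | x ∈ T}` edges. Rotations of the cycle permute its
independent sets, so each of the `n` vertices lies in as many of them as the vertex `1`. An
independent set containing `1` is `{1}` together with an independent set of the `h`-th power of
the path on `h + 2, …, n - h`, and these are counted by `F (n - h)`, as one sees by splitting
according to whether the last vertex is used. -/

open Finset

lemma card_filter_powerset_card_eq_add_one {α : Type*} (T : Finset α) :
    #{S ∈ T.powerset | #T = #S + 1} = #T := by
  cases hT : #T with
  | zero => simp
  | succ k =>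
    rw [filter_congr (q := fun S => #S = k) fun S _ => by omega, ← powersetCard_eq_filter,
      card_powersetCard, hT, Nat.choose_succ_self_right]

theorem card_filter_subset_card_eq_add_one_eq_sum_card {α : Type*} [DecidableEq α]
    {𝒜 : Finset (Finset α)} (h𝒜 : IsLowerSet (𝒜 : Set (Finset α))) :
    #{p ∈ 𝒜 ×ˢ 𝒜 | p.1 ⊆ p.2 ∧ #p.2 = #p.1 + 1} = ∑ T ∈ 𝒜, #T := by
  rw [card_filter, sum_product_right]
  refine sum_congr rfl fun T hT => ?_
  rw [← card_filter, ← card_filter_powerset_card_eq_add_one T]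
  congr 1
  ext S
  simp only [mem_filter, mem_powerset, and_iff_right_iff_imp]
  exact fun hST => h𝒜 hST.1 hT

def intervalSubsets (a b h : ℕ) : Finset (Finset ℕ) :=
  (Icc a b).powerset.filter (fun S => ∀ i ∈ S, ∀ j ∈ S, i < j → i + h < j)

lemma card_intervalSubsets_add_right (a b c h : ℕ) :
    #(intervalSubsets (a + c) (b + c) h) = #(intervalSubsets a b h) := by
  rw [intervalSubsets, ← image_add_right_Icc, powerset_image, filter_image,
    card_image_of_injective _ (image_injective (add_left_injective c))]
  congr 1
  refine filter_congr fun S _ => ?_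
  simp [add_right_comm _ c h]

lemma mem_pathSubsets {m h : ℕ} {S : Finset ℕ} :
    S ∈ pathSubsets m h ↔ (∀ i ∈ S, 1 ≤ i ∧ i ≤ m) ∧ ∀ i ∈ S, ∀ j ∈ S, i < j → i + h < j := by
  simp only [pathSubsets, mem_filter, mem_powerset, subset_iff, mem_Icc]

lemma nonMemberSubfamily_pathSubsets (m h : ℕ) :
    (pathSubsets m h).nonMemberSubfamily m = pathSubsets (m - 1) h := by
  ext S
  simp only [mem_nonMemberSubfamily, mem_pathSubsets]
  grind

lemma memberSubfamily_pathSubsets {m : ℕ} (hm : 1 ≤ m) (h : ℕ) :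
    (pathSubsets m h).memberSubfamily m = pathSubsets (m - h - 1) h := by
  ext S
  simp only [mem_memberSubfamily, mem_pathSubsets, forall_mem_insert]
  grind

lemma pathTotal_eq_add {m : ℕ} (hm : 1 ≤ m) (h : ℕ) :
    pathTotal m h = pathTotal (m - 1) h + pathTotal (m - h - 1) h := by
  rw [pathTotal, ← card_memberSubfamily_add_card_nonMemberSubfamily m, add_comm,
    memberSubfamily_pathSubsets hm, nonMemberSubfamily_pathSubsets, pathTotal, pathTotal]

lemma pathTotal_zero (h : ℕ) : pathTotal 0 h = 1 := rfl

/-- For `k ≤ h + 1` the truncated subtraction makes the right-hand side `pathTotal 0 h = 1`. -/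
lemma eq_pathTotal_of_recurrence {h : ℕ} {F : ℕ → ℕ}
    (hF1 : ∀ m, 1 ≤ m → m ≤ h + 1 → F m = 1)
    (hFrec : ∀ m, m > h + 1 → F m = F (m - 1) + F (m - h - 1)) :
    ∀ k, 1 ≤ k → F k = pathTotal (k - h - 1) h := by
  intro k
  induction k using Nat.strong_induction_on with
  | _ k ih =>
  intro hk
  rcases le_or_gt k (h + 1) with hkh | hkh
  · rw [hF1 k hk hkh, Nat.sub_sub, Nat.sub_eq_zero_of_le hkh, pathTotal_zero]
  · rw [hFrec k hkh, ih (k - 1) (by omega) (by omega), ih (k - h - 1) (by omega) (by omega),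
      pathTotal_eq_add (m := k - h - 1) (by omega)]
    congr 2
    omega

lemma mem_cycleSubsets {n h : ℕ} {S : Finset ℕ} :
    S ∈ cycleSubsets n h ↔ (∀ i ∈ S, 1 ≤ i ∧ i ≤ n) ∧
      ∀ i ∈ S, ∀ j ∈ S, i < j → i + h < j ∧ j + h < n + i := by
  simp only [cycleSubsets, mem_filter, mem_powerset, subset_iff, mem_Icc]

lemma subset_Icc_of_mem_cycleSubsets {n h : ℕ} {T : Finset ℕ} (hT : T ∈ cycleSubsets n h) :
    T ⊆ Icc 1 n :=
  mem_powerset.mp (mem_filter.mp hT).1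

lemma isLowerSet_cycleSubsets (n h : ℕ) : IsLowerSet (cycleSubsets n h : Set (Finset ℕ)) := by
  intro T S hST hT
  simp only [mem_coe, mem_cycleSubsets] at hT ⊢
  exact ⟨fun i hi => hT.1 i (hST hi), fun i hi j hj => hT.2 i (hST hi) j (hST hj)⟩

lemma card_filter_one_mem_cycleSubsets {n : ℕ} (hn : 0 < n) (h : ℕ) :
    #{T ∈ cycleSubsets n h | 1 ∈ T} = pathTotal (n - 2 * h - 1) h := by
  -- the interval `h + 2, …, n - h`, written as a translate of `1, …, n - 2 * h - 1`
  have hmember : (cycleSubsets n h).memberSubfamily 1 =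
      intervalSubsets (1 + (h + 1)) (n - 2 * h - 1 + (h + 1)) h := by
    ext S
    simp only [mem_memberSubfamily, mem_cycleSubsets, forall_mem_insert, intervalSubsets,
      mem_filter, mem_powerset, subset_iff, mem_Icc]
    grind
  rw [pathTotal, pathSubsets, ← intervalSubsets, ← card_intervalSubsets_add_right _ _ (h + 1),
    ← hmember, memberSubfamily, card_image_of_injOn ((erase_injOn' 1).mono fun T hT => ?_)]
  exact (mem_filter.1 hT).2

def rotate (n s i : ℕ) : ℕ := (i - 1 + s) % n + 1

lemma rotate_mem_Icc {n : ℕ} (hn : 0 < n) (s i : ℕ) : rotate n s i ∈ Icc 1 n := by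
  have := Nat.mod_lt (i - 1 + s) hn
  rw [mem_Icc, rotate]
  omega

lemma rotate_rotate (n s t i : ℕ) : rotate n t (rotate n s i) = rotate n (s + t) i := by
  simp only [rotate, Nat.add_sub_cancel, Nat.mod_add_mod, add_assoc]

lemma rotate_self {n i : ℕ} (hi : i ∈ Icc 1 n) : rotate n n i = i := by
  rw [mem_Icc] at hi
  rw [rotate, Nat.add_mod_right, Nat.mod_eq_of_lt (by omega)]
  omega

lemma image_rotate_image_rotate {n s t : ℕ} (hst : s + t = n) {T : Finset ℕ}
    (hT : T ⊆ Icc 1 n) : (T.image (rotate n s)).image (rotate n t) = T := by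
  rw [image_image, image_congr (g := id), image_id]
  intro i hi
  rw [Function.comp_apply, rotate_rotate, hst, rotate_self (hT hi), id]

/-- For `i < j` the hypotheses say `h < j - i < n - h`; rotation changes `j - i` only modulo `n`,
and replacing it by `n - (j - i)` preserves these bounds. -/
lemma cycle_gap_rotate {n h s i j : ℕ} (hi : 1 ≤ i) (hj : j ≤ n) (hij : i + h < j)
    (hji : j + h < n + i) :
    (rotate n s i < rotate n s j →
      rotate n s i + h < rotate n s j ∧ rotate n s j + h < n + rotate n s i) ∧
    (rotate n s j < rotate n s i →
      rotate n s j + h < rotate n s i ∧ rotate n s i + h < n + rotate n s j) := by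
  have hn : 0 < n := by omega
  rw [rotate, rotate]
  set a := (i - 1 + s) % n with ha
  have hb : (j - 1 + s) % n = (a + (j - i)) % n := by
    rw [ha, Nat.mod_add_mod]
    congr 1
    omega
  have han : a < n := Nat.mod_lt _ hn
  rw [hb]
  rcases lt_or_ge (a + (j - i)) n with hc | hc
  · rw [Nat.mod_eq_of_lt hc]
    omega
  · rw [Nat.mod_eq_sub_mod hc, Nat.mod_eq_of_lt (by omega)]
    omega

lemma image_rotate_mem_cycleSubsets {n h : ℕ} (hn : 0 < n) (s : ℕ) {T : Finset ℕ}
    (hT : T ∈ cycleSubsets n h) : T.image (rotate n s) ∈ cycleSubsets n h := by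
  rw [mem_cycleSubsets] at hT ⊢
  refine ⟨fun a ha => ?_, fun a ha b hb hab => ?_⟩
  · obtain ⟨i, -, rfl⟩ := mem_image.mp ha
    exact mem_Icc.mp (rotate_mem_Icc hn s i)
  · obtain ⟨i, hiT, rfl⟩ := mem_image.mp ha
    obtain ⟨j, hjT, rfl⟩ := mem_image.mp hb
    rcases lt_trichotomy i j with hlt | rfl | hlt
    · obtain ⟨hij, hji⟩ := hT.2 i hiT j hjT hlt
      exact (cycle_gap_rotate (hT.1 i hiT).1 (hT.1 j hjT).2 hij hji).1 hab
    · exact absurd hab (lt_irrefl _)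
    · obtain ⟨hji, hij⟩ := hT.2 j hjT i hiT hlt
      exact (cycle_gap_rotate (hT.1 j hjT).1 (hT.1 i hiT).2 hji hij).2 hab

lemma card_filter_mem_cycleSubsets {n h x : ℕ} (hx : x ∈ Icc 1 n) :
    #{T ∈ cycleSubsets n h | x ∈ T} = #{T ∈ cycleSubsets n h | 1 ∈ T} := by
  rw [mem_Icc] at hx
  have hn : 0 < n := by omega
  have hx1 : rotate n (n + 1 - x) x = 1 := by
    rw [rotate, show x - 1 + (n + 1 - x) = n by omega, Nat.mod_self]
  have h1x : rotate n (x - 1) 1 = x := by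
    rw [rotate, Nat.sub_self, zero_add, Nat.mod_eq_of_lt (by omega)]
    omega
  refine card_nbij' (·.image (rotate n (n + 1 - x))) (·.image (rotate n (x - 1)))
    (fun T hT => ?_) (fun U hU => ?_) (fun T hT => ?_) (fun U hU => ?_)
  all_goals simp only [mem_coe, mem_filter] at *
  · exact ⟨image_rotate_mem_cycleSubsets hn _ hT.1, mem_image.2 ⟨x, hT.2, hx1⟩⟩
  · exact ⟨image_rotate_mem_cycleSubsets hn _ hU.1, mem_image.2 ⟨1, hU.2, h1x⟩⟩
  · exact image_rotate_image_rotate (by omega) (subset_Icc_of_mem_cycleSubsets hT.1)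
  · exact image_rotate_image_rotate (by omega) (subset_Icc_of_mem_cycleSubsets hU.1)

lemma sum_card_cycleSubsets (n h : ℕ) :
    ∑ T ∈ cycleSubsets n h, #T = n * #{T ∈ cycleSubsets n h | 1 ∈ T} :=
  calc ∑ T ∈ cycleSubsets n h, #T = ∑ T ∈ cycleSubsets n h, #(Icc 1 n ∩ T) :=
        sum_congr rfl fun T hT => by rw [inter_eq_right.2 (subset_Icc_of_mem_cycleSubsets hT)]
    _ = #(Icc 1 n) * #{T ∈ cycleSubsets n h | 1 ∈ T} :=
        sum_card_inter fun x hx => card_filter_mem_cycleSubsets hx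
    _ = n * #{T ∈ cycleSubsets n h | 1 ∈ T} := by rw [Nat.card_Icc, Nat.add_sub_cancel]

theorem stmt19 (n h : ℕ) (hn : h < n) (F : ℕ → ℕ)
    (hF1 : ∀ m, 1 ≤ m → m ≤ h + 1 → F m = 1)
    (hFrec : ∀ m, m > h + 1 → F m = F (m - 1) + F (m - h - 1)) :
    cycleEdges n h = n * F (n - h) := by
  have hn0 : 0 < n := by omega
  rw [cycleEdges, card_filter_subset_card_eq_add_one_eq_sum_card (isLowerSet_cycleSubsets n h),
    sum_card_cycleSubsets, card_filter_one_mem_cycleSubsets hn0,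
    eq_pathTotal_of_recurrence hF1 hFrec (n - h) (by omega)]
  congr 2
  omega
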